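/- arXiv:2406.03648 — 6 statements merged into one kernel-verified Lean document; each statement's English description precedes it below -/
import Mathlib

section
/- Let G = (V,E) be a directed graph with n vertices, D ⊆ E an acyclic edge subset, τ a topological order of D (i.e., τ(u) < τ(v) for all (u,v) ∈ D), and w : E → ℕ a weight function satisfying w(u,v) ≥ |τ(v) - τ(u)| for every edge (u,v) ∈ E, with equality when (u,v) ∈ D. Then for any directed path P in G, the total weight of the edges of P that lie in D is at most n plus the total weight of the edges of P not in D; that is, w(P ∩ D) ≤ n + w(P \ D). -/
/-!
Read `τ` as a potential on the vertices. Along an edge `(u, v)` of `D` the potential rises by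
exactly `w (u, v)`, and along any other edge it falls by at most `w (u, v)`. Telescoping along the
path, `w(P ∩ D) - w(P ∖ D)` is at most the total rise `τ(last) - τ(first) < n`.
-/

theorem List.sum_map_zip_tail_le_of_isChain {V : Type*} (f : V × V → ℤ) (φ : V → ℤ) :
    ∀ (p : List V), p.IsChain (fun u v => f (u, v) ≤ φ v - φ u) → (hne : p ≠ []) →
      ((p.zip p.tail).map f).sum ≤ φ (p.getLast hne) - φ (p.head hne)
  | [], _, hne => absurd rfl hne
  | [_], _, _ => by simp
  | a :: b :: r, hp, _ => by
    have ih := List.sum_map_zip_tail_le_of_isChain f φ (b :: r) hp.tail (List.cons_ne_nil _ _)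
    have hab : f (a, b) ≤ φ b - φ a := hp.rel
    simp only [List.tail_cons, List.zip_cons_cons, List.map_cons, List.sum_cons,
      List.getLast_cons_cons, List.head_cons] at ih ⊢
    linarith

theorem List.sum_map_ite_neg_eq_sub {α : Type*} (P : α → Prop) [DecidablePred P] (w : α → ℕ)
    (l : List α) :
    (l.map fun e => if P e then (w e : ℤ) else -(w e : ℤ)).sum =
      ((l.filter fun e => decide (P e)).map w).sum -
        ((l.filter fun e => decide (¬P e)).map w).sum := by
  induction l with
  | nil => simp
  | cons e l ih =>
    by_cases h : P e <;> simp [h, ih] <;> ring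

theorem stmt_1_general {V : Type*} [DecidableEq V] (n : ℕ)
    (E D : Finset (V × V))
    (τ : V ≃ Fin n)
    (hτD : ∀ e ∈ D, (τ e.1 : ℕ) < (τ e.2 : ℕ))
    (w : V × V → ℕ)
    (hw : ∀ e ∈ E, ((τ e.2 : ℤ) - (τ e.1 : ℤ)).natAbs ≤ w e)
    (hwD : ∀ e ∈ D, w e = ((τ e.2 : ℤ) - (τ e.1 : ℤ)).natAbs)
    (p : List V) (hp : p.Chain' (fun u v => (u, v) ∈ E)) :
    (((p.zip p.tail).filter (fun e => decide (e ∈ D))).map w).sum ≤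
      n + (((p.zip p.tail).filter (fun e => decide (e ∉ D))).map w).sum := by
  rcases eq_or_ne p [] with rfl | hne
  · simp
  have hstep : ∀ ⦃u v⦄, (u, v) ∈ E →
      (if (u, v) ∈ D then (w (u, v) : ℤ) else -(w (u, v) : ℤ)) ≤ (τ v : ℤ) - (τ u : ℤ) := by
    intro u v huv
    by_cases huvD : (u, v) ∈ D
    · have hlt : (τ u : ℕ) < τ v := hτD _ huvD
      have hweq : w (u, v) = ((τ v : ℤ) - τ u).natAbs := hwD _ huvD
      simp only [huvD, if_true]
      omega
    · have hge : ((τ v : ℤ) - τ u).natAbs ≤ w (u, v) := hw _ huv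
      simp only [huvD, if_false]
      omega
  have htele := List.sum_map_zip_tail_le_of_isChain
    (fun e => if e ∈ D then (w e : ℤ) else -(w e : ℤ)) (fun v => (τ v : ℤ)) p (hp.imp hstep) hne
  rw [List.sum_map_ite_neg_eq_sub] at htele
  have hlast := (τ (p.getLast hne)).isLt
  omega

/-- Let `G = (V,E)` be a directed graph on `n` vertices, `D ⊆ E` an acyclic
edge subset with a topological order `τ` (so `τ u < τ v` for `(u,v) ∈ D`), and `w : E → ℕ`
a weight function with `w (u,v) ≥ |τ v − τ u|` on every edge, with equality on `D`.
Then for every directed path `P` in `G`, `w(P ∩ D) ≤ n + w(P ∖ D)`. -/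
theorem stmt_1 {V : Type*} [Fintype V] [DecidableEq V] (n : ℕ)
    (hn : Fintype.card V = n) (E D : Finset (V × V)) (hD : D ⊆ E)
    (τ : V ≃ Fin n)
    (hτD : ∀ e ∈ D, (τ e.1 : ℕ) < (τ e.2 : ℕ))
    (w : V × V → ℕ)
    (hw : ∀ e ∈ E, ((τ e.2 : ℤ) - (τ e.1 : ℤ)).natAbs ≤ w e)
    (hwD : ∀ e ∈ D, w e = ((τ e.2 : ℤ) - (τ e.1 : ℤ)).natAbs)
    (p : List V) (hp : p.Chain' (fun u v => (u, v) ∈ E)) :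
    (((p.zip p.tail).filter (fun e => decide (e ∈ D))).map w).sum ≤
      n + (((p.zip p.tail).filter (fun e => decide (e ∉ D))).map w).sum :=
  stmt_1_general n E D τ hτD w hw hwD p hp
end

section
/- Let G = (V,E) be a directed graph and let G' be the directed graph obtained from G by reversing every edge along a single directed path R in G (replacing each edge (u,v) of R by (v,u)). Then for every vertex subset S ⊆ V, the number of edges from S to V∖S changes by at most 1: ||E_G(S, V∖S)| − |E_{G'}(S, V∖S)|| ≤ 1. -/
/-!
Only the edges of the path change, so the difference of the two cut sizes is the number of
path edges leaving `S` minus the number entering `S`. Each path edge `(u, v)` contributes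
`𝟙_S u - 𝟙_S v` to this difference, so the sum telescopes to `𝟙_S (first) - 𝟙_S (last)`,
which lies in `{-1, 0, 1}`.
-/

theorem List.sum_map_consecutivePairs_sub {α M : Type*} [AddCommGroup M] (f : α → M)
    (a : α) (l : List α) :
    ((a :: l).consecutivePairs.map fun e => f e.1 - f e.2).sum
      = f a - f ((a :: l).getLast (cons_ne_nil a l)) := by
  induction l generalizing a with
  | nil => simp [consecutivePairs]
  | cons b l ih =>
    simp only [consecutivePairs, tail_cons, zip_cons_cons, map_cons, sum_cons,
      getLast_cons_cons] at ih ⊢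
    rw [ih b]
    abel

theorem List.countP_out_sub_countP_in {V : Type*} [DecidableEq V] (S : Finset V)
    (L : List (V × V)) :
    (L.countP (fun e => e.1 ∈ S ∧ e.2 ∉ S) : ℤ) - L.countP (fun e => e.2 ∈ S ∧ e.1 ∉ S)
      = (L.map fun e => (if e.1 ∈ S then 1 else 0 : ℤ) - if e.2 ∈ S then 1 else 0).sum := by
  induction L with
  | nil => simp
  | cons e L ih =>
    simp only [countP_cons, map_cons, sum_cons, ← ih]
    split_ifs <;> simp_all <;> omega

theorem Multiset.card_filter_sub_card_filter_sub_add_map {β : Type*} [DecidableEq β]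
    (q : β → Prop) [DecidablePred q] (g : β → β) {E P : Multiset β} (h : P ≤ E) :
    ((E.filter q).card : ℤ) - ((E - P + P.map g).filter q).card
      = (P.filter q).card - (P.filter (fun e => q (g e))).card := by
  obtain ⟨F, rfl⟩ := le_iff_exists_add.mp h
  simp only [add_tsub_cancel_left, filter_add, card_add, filter_map, card_map,
    Function.comp_def]
  push_cast
  ring

theorem stmt_2_general {V : Type*} [DecidableEq V]
    (E : Multiset (V × V)) (p : List V)
    (hsub : (↑(p.zip p.tail) : Multiset (V × V)) ≤ E)
    (S : Finset V) :
    |((E.filter (fun e => e.1 ∈ S ∧ e.2 ∉ S)).card : ℤ) -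
      (((E - ↑(p.zip p.tail) +
          (↑(p.zip p.tail) : Multiset (V × V)).map Prod.swap).filter
            (fun e => e.1 ∈ S ∧ e.2 ∉ S)).card : ℤ)| ≤ 1 := by
  rw [Multiset.card_filter_sub_card_filter_sub_add_map _ _ hsub]
  simp only [Multiset.filter_coe, Multiset.coe_card, ← List.countP_eq_length_filter,
    Prod.fst_swap, Prod.snd_swap]
  rcases p with _ | ⟨a, l⟩
  · simp
  · rw [List.countP_out_sub_countP_in, List.sum_map_consecutivePairs_sub
      (fun v => if v ∈ S then (1 : ℤ) else 0)]
    split_ifs <;> simp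

/-- Let `G` be a directed (multi)graph with edge multiset `E`, and let `G'`
be obtained by reversing every edge along a single directed path `R` (given by its vertex
sequence `p`, whose consecutive edges are distinct and belong to `E`). Then for every vertex
subset `S`, the number of edges from `S` to its complement changes by at most `1`. -/
theorem stmt_2 {V : Type*} [Fintype V] [DecidableEq V]
    (E : Multiset (V × V)) (p : List V)
    (hdistinct : (p.zip p.tail).Nodup)
    (hsub : (↑(p.zip p.tail) : Multiset (V × V)) ≤ E)
    (S : Finset V) :
    |((E.filter (fun e => e.1 ∈ S ∧ e.2 ∉ S)).card : ℤ) -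
      (((E - ↑(p.zip p.tail) +
          (↑(p.zip p.tail) : Multiset (V × V)).map Prod.swap).filter
            (fun e => e.1 ∈ S ∧ e.2 ∉ S)).card : ℤ)| ≤ 1 :=
  stmt_2_general E p hsub S
end

section
/- Let G = (V,E) be a directed graph and let S₁, ..., S_k be a sequence of vertex sets where S_i ⊆ V_{i-1}, with V₀ = V and V_i = V_{i-1} ∖ S_i. Let J ⊆ {1,...,k} and S = ∪_{j∈J} S_j. Then every edge of G from S to V∖S belongs to ∪_{i∈J} E_{G[V_{i-1}]}(S_i, V_{i-1}∖S_i) ∪ ∪_{i∉J} E_{G[V_{i-1}]}(V_{i-1}∖S_i, S_i). -/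
/-!
An edge `u → v` leaving `S` is charged to the cut that removed the first of its endpoints.
If `u ∈ S j` goes first, `v` is still in `V_j ∖ S j`; otherwise `v` lies in an unselected cut
`S i` with `i < j`, and `u` is still in `V_i ∖ S i`.
-/

open Finset

/-- The set of vertices remaining after the cuts `S 0, …, S (i-1)` have been carved out:
`V_i = V ∖ (S 0 ∪ ⋯ ∪ S (i-1))`. -/
def Vrem {V : Type*} [Fintype V] [DecidableEq V] (S : ℕ → Finset V) (i : ℕ) : Finset V :=
  Finset.univ \ (Finset.range i).biUnion S

section Vrem

variable {V : Type*} [Fintype V] [DecidableEq V] (S : ℕ → Finset V)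

theorem Vrem_succ (i : ℕ) : Vrem S (i + 1) = Vrem S i \ S i := by
  ext x
  simp only [Vrem, range_add_one, biUnion_insert, mem_sdiff, mem_univ, mem_union, true_and]
  tauto

theorem Vrem_antitone : Antitone (Vrem S) := fun _ _ hij =>
  sdiff_subset_sdiff le_rfl (biUnion_subset_biUnion_of_subset_left S (range_subset_range.2 hij))

variable {S}

theorem mem_Vrem_sdiff_of_lt {a b : ℕ} {x : V} (hab : a < b) (hx : x ∈ Vrem S b) :
    x ∈ Vrem S a \ S a :=
  Vrem_succ S a ▸ Vrem_antitone S hab hx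

end Vrem

/-- Given a sequence of cuts `S i ⊆ V_i` (with `V_0 = V`,
`V_{i+1} = V_i ∖ S i`) and `J ⊆ {0,…,k-1}`, every edge of `G` leaving the union
`T = ⋃_{j ∈ J} S j` belongs to the out-boundary of some selected cut `S i` (`i ∈ J`), taken
inside the induced subgraph `G[V_i]`, or to the in-boundary of some unselected cut
`S i` (`i ∉ J`), taken inside `G[V_i]`. -/
theorem stmt_5 {V : Type*} [Fintype V] [DecidableEq V]
    (E : Finset (V × V)) (S : ℕ → Finset V) (k : ℕ)
    (hS : ∀ i < k, S i ⊆ Vrem S i) (J : Finset ℕ) (hJ : J ⊆ Finset.range k) :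
    ∀ e ∈ E, e.1 ∈ J.biUnion S → e.2 ∉ J.biUnion S →
      (∃ i ∈ J, e.1 ∈ S i ∧ e.2 ∈ Vrem S i \ S i) ∨
      (∃ i ∈ Finset.range k, i ∉ J ∧ e.1 ∈ Vrem S i \ S i ∧ e.2 ∈ S i) := by
  intro e _ hu hv
  obtain ⟨j, hjJ, huj⟩ := mem_biUnion.mp hu
  have hjk : j < k := mem_range.mp (hJ hjJ)
  by_cases hvk : e.2 ∈ Vrem S k
  · exact Or.inl ⟨j, hjJ, huj, mem_Vrem_sdiff_of_lt hjk hvk⟩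
  obtain ⟨i, hik, hvi⟩ : ∃ i < k, e.2 ∈ S i := by simpa [Vrem] using hvk
  have hiJ : i ∉ J := fun hiJ => hv (mem_biUnion.mpr ⟨i, hiJ, hvi⟩)
  rcases lt_trichotomy i j with hij | rfl | hji
  · exact Or.inr ⟨i, mem_range.mpr hik, hiJ, mem_Vrem_sdiff_of_lt hij (hS j hjk huj), hvi⟩
  · exact absurd hjJ hiJ
  · exact Or.inl ⟨j, hjJ, huj, mem_Vrem_sdiff_of_lt hji (hS i hik hvi)⟩
end

section
/- Consider a flow instance on a directed graph G = (V,E) with capacities c, source vector Δ, and sink vector ∇, and edge weights w : E → ℕ₊. Let f* be a feasible (Δ,∇)-flow with average w-length at most h, i.e., w(f*) ≤ |f*|·h. Let f be any feasible (Δ,∇)-flow such that (i) in the residual graph G_f, the w-distance from any unsaturated source to any unsaturated sink exceeds 3h, and (ii) w(f) ≤ 9h·|f|. Then |f| ≥ (1/6)·|f*|. -/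
open Finset

/-- Net flow leaving `v`: flow on out-edges minus flow on in-edges. -/
def fOut {V : Type*} [DecidableEq V] (E : Finset (V × V)) (f : V × V → ℚ) (v : V) : ℚ :=
  (∑ e ∈ E.filter (fun e => e.1 = v), f e) - ∑ e ∈ E.filter (fun e => e.2 = v), f e

/-- Excess of `f` at `v`: `max{Δ(v) − f^out(v) − ∇(v), 0}`. -/
def exF {V : Type*} [DecidableEq V] (E : Finset (V × V)) (srcW sinkW : V → ℕ)
    (f : V × V → ℚ) (v : V) : ℚ :=
  max ((srcW v : ℚ) - fOut E f v - (sinkW v : ℚ)) 0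

/-- Absorption of `f` at `v`: `min{Δ(v) − f^out(v), ∇(v)}`. -/
def absF {V : Type*} [DecidableEq V] (E : Finset (V × V)) (srcW sinkW : V → ℕ)
    (f : V × V → ℚ) (v : V) : ℚ :=
  min ((srcW v : ℚ) - fOut E f v) (sinkW v : ℚ)

/-- Value `|f| = ∑_v abs_f(v)` of the flow. -/
def valF {V : Type*} [Fintype V] [DecidableEq V] (E : Finset (V × V)) (srcW sinkW : V → ℕ)
    (f : V × V → ℚ) : ℚ :=
  ∑ v, absF E srcW sinkW f v

/-- `f` is a `(Δ,∇)`-flow: nonnegative, supported on `E`, with `0 ≤ ex_f ≤ Δ`. -/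
def IsFlow {V : Type*} [DecidableEq V] (E : Finset (V × V)) (srcW sinkW : V → ℕ)
    (f : V × V → ℚ) : Prop :=
  (∀ e, 0 ≤ f e) ∧ (∀ e, e ∉ E → f e = 0) ∧ ∀ v, exF E srcW sinkW f v ≤ (srcW v : ℚ)

/-- Residual weight of a step from `u` to `v` in the residual graph `G_f` (`⊤` if no residual
edge from `u` to `v` exists): a forward residual edge `(u,v)` exists when `f(u,v) < c(u,v)`
and carries weight `w(u,v)`, a backward residual edge when `f(v,u) > 0`, carrying weight
`w(v,u)`. -/
noncomputable def resW {V : Type*} [DecidableEq V] (E : Finset (V × V)) (c : V × V → ℕ) (w : V × V → ℕ)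
    (f : V × V → ℚ) (u v : V) : ℕ∞ :=
  min (if (u, v) ∈ E ∧ f (u, v) < (c (u, v) : ℚ) then ((w (u, v) : ℕ) : ℕ∞) else ⊤)
      (if (v, u) ∈ E ∧ 0 < f (v, u) then ((w (v, u) : ℕ) : ℕ∞) else ⊤)

/-!
The certificate is a potential: let `Φ(v)` be the residual `w`-distance from the unsaturated
sources of `f` to `v`, capped at `M = 3h + 1`. Then `Φ = 0` at unsaturated sources, `Φ = M` at
unsaturated sinks (by (i)), and `Φ` grows by at most `w(e)` along every residual edge `e`. Every
edge carrying flow of `f* − f` is a residual edge of `f` in the direction of that flow, so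
summing `Φ` against the divergence of `f* − f` gives
`M (|f*| − |f|) ≤ ∑_e w(e) |f*(e) − f(e)| ≤ w(f*) + w(f) ≤ h|f*| + 9h|f|`,
i.e. `(2h + 1)|f*| ≤ (12h + 1)|f|`, which implies `|f| ≥ |f*| / 6`.
-/

section Paths

variable {V : Type*} (g : V → V → ℕ∞)

def pathLength (p : List V) : ℕ∞ :=
  ((p.zip p.tail).map (fun st => g st.1 st.2)).sum

theorem pathLength_concat {p : List V} {u : V} (hu : p.getLast? = some u) (v : V) :
    pathLength g (p ++ [v]) = pathLength g p + g u v := by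
  induction p with
  | nil => simp at hu
  | cons a q ih =>
    cases q with
    | nil => simp_all [pathLength]
    | cons b r =>
      rw [List.getLast?_cons_cons] at hu
      have := ih hu
      simp only [pathLength, List.cons_append, List.zip_cons_cons, List.tail_cons,
        List.map_cons, List.sum_cons] at this ⊢
      rw [this, add_assoc]

/-- `⊤` when no path from `S` reaches `v`. -/
noncomputable def distFrom (S : Set V) (v : V) : ℕ∞ :=
  ⨅ p : {p : List V // (∃ s ∈ S, p.head? = some s) ∧ p.getLast? = some v}, pathLength g p.1

variable {g} {S : Set V}

theorem le_distFrom {M : ℕ∞} {v : V}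
    (h : ∀ s ∈ S, ∀ p : List V, p.head? = some s → p.getLast? = some v → M ≤ pathLength g p) :
    M ≤ distFrom g S v :=
  le_iInf fun ⟨p, ⟨s, hs, hp⟩, hv⟩ => h s hs p hp hv

theorem distFrom_eq_zero {s : V} (hs : s ∈ S) : distFrom g S s = 0 :=
  nonpos_iff_eq_zero.1 <| iInf_le_of_le ⟨[s], ⟨s, hs, rfl⟩, rfl⟩ (by simp [pathLength])

theorem distFrom_le_add (u v : V) : distFrom g S v ≤ distFrom g S u + g u v := by
  unfold distFrom
  rw [ENat.iInf_add]
  refine le_iInf fun ⟨p, ⟨s, hs, hp⟩, hu⟩ => ?_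
  rw [← pathLength_concat g hu]
  refine iInf_le_of_le ⟨p ++ [v], ⟨s, hs, ?_⟩, List.getLast?_concat⟩ le_rfl
  rw [List.head?_append, hp]
  rfl

variable (g S)

noncomputable def cappedDist (M : ℕ) (v : V) : ℕ :=
  (min (distFrom g S v) M).toNat

variable {g S}

theorem cappedDist_le (M : ℕ) (v : V) : cappedDist g S M v ≤ M :=
  ENat.toNat_le_of_le_natCast (min_le_right _ _)

theorem cappedDist_eq_zero {M : ℕ} {s : V} (hs : s ∈ S) : cappedDist g S M s = 0 := by
  simp [cappedDist, distFrom_eq_zero hs]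

theorem cappedDist_eq_cap {M : ℕ} {v : V} (hv : (M : ℕ∞) ≤ distFrom g S v) :
    cappedDist g S M v = M := by
  rw [cappedDist, min_eq_right hv, ENat.toNat_natCast]

theorem cappedDist_le_add {M r : ℕ} {u v : V} (huv : g u v ≤ r) :
    cappedDist g S M v ≤ cappedDist g S M u + r := by
  have hcap : ∀ x, min (distFrom g S x) M = (cappedDist g S M x : ℕ∞) := fun x =>
    (ENat.natCast_toNat (ne_top_of_le_ne_top (ENat.natCast_ne_top M) (min_le_right _ _))).symm
  have : min (distFrom g S v) M ≤ min (distFrom g S u) M + r := by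
    rw [← min_add_add_right]
    exact min_le_min ((distFrom_le_add u v).trans (add_le_add_right huv _)) le_self_add
  rw [hcap, hcap] at this
  exact_mod_cast this

end Paths

section Flows

variable {V : Type*} [DecidableEq V] {E : Finset (V × V)}

theorem sum_mul_fOut [Fintype V] (f : V × V → ℚ) (Φ : V → ℚ) :
    ∑ v, Φ v * fOut E f v = ∑ e ∈ E, f e * (Φ e.1 - Φ e.2) := by
  have hfiber : ∀ π : V × V → V,
      ∑ v, Φ v * ∑ e ∈ E.filter (fun e => π e = v), f e = ∑ e ∈ E, f e * Φ (π e) := by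
    intro π
    rw [← Finset.sum_fiberwise_of_maps_to (fun e _ => Finset.mem_univ (π e))]
    refine Finset.sum_congr rfl fun v _ => ?_
    rw [Finset.mul_sum]
    refine Finset.sum_congr rfl fun e he => ?_
    rw [(Finset.mem_filter.1 he).2, mul_comm]
  simp only [fOut, mul_sub, Finset.sum_sub_distrib, hfiber Prod.fst, hfiber Prod.snd]

theorem sum_fOut_eq_zero [Fintype V] (f : V × V → ℚ) : ∑ v, fOut E f v = 0 := by
  simpa using sum_mul_fOut (E := E) f (fun _ => 1)

variable {srcW sinkW : V → ℕ} {f : V × V → ℚ}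

theorem neg_fOut_le_absF (hex : ∀ v, exF E srcW sinkW f v ≤ srcW v) (v : V) :
    -fOut E f v ≤ absF E srcW sinkW f v := by
  have := (le_max_left _ _).trans (hex v)
  exact le_min (by linarith [(srcW v).cast_nonneg (α := ℚ)]) (by linarith)

theorem valF_nonneg [Fintype V] (hex : ∀ v, exF E srcW sinkW f v ≤ srcW v) :
    0 ≤ valF E srcW sinkW f := by
  have := Finset.sum_le_sum fun v (_ : v ∈ Finset.univ) => neg_fOut_le_absF hex v
  rwa [Finset.sum_neg_distrib, sum_fOut_eq_zero, neg_zero] at this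

end Flows

theorem mul_min_sub_min_le {R : Type*} [CommRing R] [LinearOrder R] [IsStrictOrderedRing R]
    {a b n M φ : R} (hφ0 : 0 ≤ φ) (hφM : φ ≤ M) (hlt : b < n → φ = M) (hgt : n < b → φ = 0) :
    M * (min a n - min b n) ≤ φ * (a - b) := by
  rcases lt_trichotomy b n with hbn | rfl | hbn
  · rw [hlt hbn, min_eq_left hbn.le]
    exact mul_le_mul_of_nonneg_left (by linarith [min_le_left a n]) (hφ0.trans hφM)
  · rw [min_self]
    rcases le_total a b with hab | hab
    · rw [min_eq_left hab]
      nlinarith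
    · rw [min_eq_right hab, sub_self, mul_zero]
      exact mul_nonneg hφ0 (sub_nonneg.2 hab)
  · rw [hgt hbn, zero_mul, min_eq_right hbn.le]
    exact mul_nonpos_of_nonneg_of_nonpos (hφ0.trans hφM) (by linarith [min_le_right a n])

section Residual

variable {V : Type*} [DecidableEq V] {E : Finset (V × V)} {c w : V × V → ℕ} {f : V × V → ℚ}

theorem resW_le_of_lt_cap {u v : V} (he : (u, v) ∈ E) (hlt : f (u, v) < c (u, v)) :
    resW E c w f u v ≤ w (u, v) :=
  min_le_of_left_le (by rw [if_pos ⟨he, hlt⟩])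

theorem resW_le_of_pos {u v : V} (he : (v, u) ∈ E) (hpos : 0 < f (v, u)) :
    resW E c w f u v ≤ w (v, u) :=
  min_le_of_right_le (by rw [if_pos ⟨he, hpos⟩])

variable {Φ : V → ℚ}

/-- Every edge on which `g − f` is nonzero is a residual edge of `f` in the direction of
`g − f`, so `Φ` cannot rise along it by more than its weight. -/
theorem flow_sub_mul_potential_sub_le
    (hΦ : ∀ u v (r : ℕ), resW E c w f u v ≤ r → Φ v ≤ Φ u + r) {g : V × V → ℚ} {e : V × V}
    (he : e ∈ E) (hf0 : 0 ≤ f e) (hg0 : 0 ≤ g e) (hgc : g e ≤ c e) :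
    (g e - f e) * (Φ e.2 - Φ e.1) ≤ w e * (g e + f e) := by
  obtain ⟨u, v⟩ := e
  have hw : (0 : ℚ) ≤ w (u, v) := by positivity
  rcases lt_trichotomy (g (u, v)) (f (u, v)) with hgf | hgf | hgf
  · have := hΦ v u _ (resW_le_of_pos he (hg0.trans_lt hgf))
    nlinarith
  · rw [hgf, sub_self, zero_mul]
    positivity
  · have := hΦ u v _ (resW_le_of_lt_cap he (hgf.trans_le hgc))
    nlinarith

end Residual

theorem mul_valF_sub_le {V : Type*} [Fintype V] [DecidableEq V] {E : Finset (V × V)}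
    {c w : V × V → ℕ} {srcW sinkW : V → ℕ} {f g : V × V → ℚ} {Φ : V → ℚ} {M : ℚ}
    (hf0 : ∀ e ∈ E, 0 ≤ f e) (hg0 : ∀ e ∈ E, 0 ≤ g e) (hgc : ∀ e ∈ E, g e ≤ c e)
    (hΦ0 : ∀ v, 0 ≤ Φ v) (hΦM : ∀ v, Φ v ≤ M)
    (hΦsrc : ∀ v, 0 < exF E srcW sinkW f v → Φ v = 0)
    (hΦsink : ∀ v, absF E srcW sinkW f v < sinkW v → Φ v = M)
    (hΦres : ∀ u v (r : ℕ), resW E c w f u v ≤ r → Φ v ≤ Φ u + r) :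
    M * (valF E srcW sinkW g - valF E srcW sinkW f)
      ≤ ∑ e ∈ E, (w e : ℚ) * g e + ∑ e ∈ E, (w e : ℚ) * f e := by
  have hvertex : ∀ v, M * (absF E srcW sinkW g v - absF E srcW sinkW f v)
      ≤ Φ v * (fOut E f v - fOut E g v) := fun v => by
    have key := mul_min_sub_min_le (a := srcW v - fOut E g v) (b := srcW v - fOut E f v)
      (hΦ0 v) (hΦM v) (fun hb => hΦsink v (min_lt_iff.2 (.inl hb)))
      (fun hb => hΦsrc v (lt_max_of_lt_left (by linarith)))
    rwa [sub_sub_sub_cancel_left] at key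
  calc M * (valF E srcW sinkW g - valF E srcW sinkW f)
      = ∑ v, M * (absF E srcW sinkW g v - absF E srcW sinkW f v) := by
        rw [valF, valF, ← Finset.sum_sub_distrib, Finset.mul_sum]
    _ ≤ ∑ v, Φ v * (fOut E f v - fOut E g v) := Finset.sum_le_sum fun v _ => hvertex v
    _ = (∑ v, Φ v * fOut E f v) - ∑ v, Φ v * fOut E g v := by
        simp only [mul_sub, Finset.sum_sub_distrib]
    _ = ∑ e ∈ E, (g e - f e) * (Φ e.2 - Φ e.1) := by
        rw [sum_mul_fOut, sum_mul_fOut, ← Finset.sum_sub_distrib]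
        exact Finset.sum_congr rfl fun e _ => by ring
    _ ≤ ∑ e ∈ E, (w e : ℚ) * (g e + f e) := Finset.sum_le_sum fun e he =>
        flow_sub_mul_potential_sub_le hΦres he (hf0 e he) (hg0 e he) (hgc e he)
    _ = ∑ e ∈ E, (w e : ℚ) * g e + ∑ e ∈ E, (w e : ℚ) * f e := by
        simp only [mul_add, Finset.sum_add_distrib]

theorem stmt_8_general {V : Type*} [Fintype V] [DecidableEq V]
    (E : Finset (V × V)) (c : V × V → ℕ) (srcW sinkW : V → ℕ)
    (w : V × V → ℕ) (h : ℕ)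
    (fstar f : V × V → ℚ)
    (hfstar : IsFlow E srcW sinkW fstar)
    (hfstarFeas : ∀ e ∈ E, fstar e ≤ (c e : ℚ))
    (hfstarShort : ∑ e ∈ E, (w e : ℚ) * fstar e ≤ valF E srcW sinkW fstar * (h : ℚ))
    (hf : IsFlow E srcW sinkW f)
    (hdist : ∀ s t : V, 0 < exF E srcW sinkW f s →
      absF E srcW sinkW f t < (sinkW t : ℚ) →
      ∀ p : List V, p.head? = some s → p.getLast? = some t →
        ((3 * h : ℕ) : ℕ∞) < ((p.zip p.tail).map (fun st => resW E c w f st.1 st.2)).sum)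
    (hlen : ∑ e ∈ E, (w e : ℚ) * f e ≤ 9 * (h : ℚ) * valF E srcW sinkW f) :
    valF E srcW sinkW f ≥ (1 / 6) * valF E srcW sinkW fstar := by
  set Φ := cappedDist (resW E c w f) {s | 0 < exF E srcW sinkW f s} (3 * h + 1)
  have hduality := mul_valF_sub_le (Φ := fun v => (Φ v : ℚ)) (M := ((3 * h + 1 : ℕ) : ℚ))
    (fun e _ => hf.1 e) (fun e _ => hfstar.1 e) hfstarFeas (fun _ => by positivity)
    (fun v => by exact_mod_cast cappedDist_le _ v)
    (fun v hv => by exact_mod_cast cappedDist_eq_zero (S := {s | 0 < exF E srcW sinkW f s}) hv)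
    (fun t ht => by
      refine congrArg _ (cappedDist_eq_cap (le_distFrom fun s hs p hp ht' => ?_))
      exact Order.add_one_le_of_lt (hdist s t hs ht p hp ht'))
    (fun u v r huv => by exact_mod_cast cappedDist_le_add huv)
  have hstar := valF_nonneg hfstar.2.2
  push_cast at hduality
  nlinarith

/-- Let `f*` be a feasible `(Δ,∇)`-flow of average `w`-length at most `h`
(`w(f*) ≤ |f*|·h`), and let `f` be a feasible `(Δ,∇)`-flow such that (i) in the residual
graph `G_f` the `w`-distance from every unsaturated source to every unsaturated sink exceeds
`3h`, and (ii) `w(f) ≤ 9h·|f|`. Then `|f| ≥ (1/6)·|f*|`. -/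
theorem stmt_8 {V : Type*} [Fintype V] [DecidableEq V]
    (E : Finset (V × V)) (c : V × V → ℕ) (srcW sinkW : V → ℕ)
    (w : V × V → ℕ) (hw : ∀ e ∈ E, 1 ≤ w e) (h : ℕ)
    (fstar f : V × V → ℚ)
    (hfstar : IsFlow E srcW sinkW fstar)
    (hfstarFeas : ∀ e ∈ E, fstar e ≤ (c e : ℚ))
    (hfstarShort : ∑ e ∈ E, (w e : ℚ) * fstar e ≤ valF E srcW sinkW fstar * (h : ℚ))
    (hf : IsFlow E srcW sinkW f)
    (hfFeas : ∀ e ∈ E, f e ≤ (c e : ℚ))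
    (hdist : ∀ s t : V, 0 < exF E srcW sinkW f s →
      absF E srcW sinkW f t < (sinkW t : ℚ) →
      ∀ p : List V, p.head? = some s → p.getLast? = some t →
        ((3 * h : ℕ) : ℕ∞) < ((p.zip p.tail).map (fun st => resW E c w f st.1 st.2)).sum)
    (hlen : ∑ e ∈ E, (w e : ℚ) * f e ≤ 9 * (h : ℚ) * valF E srcW sinkW f) :
    valF E srcW sinkW f ≥ (1 / 6) * valF E srcW sinkW fstar :=
  stmt_8_general E c srcW sinkW w h fstar f hfstar hfstarFeas hfstarShort hf hdist hlen
end

section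
/- Let (G, c_G) be a capacitated directed graph, F ⊆ E, and suppose (W, c, r, Π) is an (R, φ, ψ)-witness of (G, c_G, F) with respect to some γ. Then G contains no cut S that is both (2R/ψ)-balanced and (φψ²/2)-sparse with respect to F; i.e., there is no S ⊆ V with min{vol_{F,c_G}(S), vol_{F,c_G}(S̄)} ≥ 2R/ψ and min{c_G(E_G(S,S̄)), c_G(E_G(S̄,S))} < (φψ²/2)·min{vol_{F,c_G}(S), vol_{F,c_G}(S̄)}. -/
open Finset

/-- Sum of capacities of edges of `F` incident to `v` (counting in- and out-edges). -/
def degCap {V : Type*} [DecidableEq V] (F : Finset (V × V)) (c : V × V → ℕ) (v : V) : ℕ :=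
  (∑ e ∈ F.filter (fun e => e.1 = v), c e) + ∑ e ∈ F.filter (fun e => e.2 = v), c e

/-- `F`-volume of a vertex set. -/
def volCap {V : Type*} [DecidableEq V] (F : Finset (V × V)) (c : V × V → ℕ) (S : Finset V) : ℕ :=
  ∑ v ∈ S, degCap F c v

/-- Total capacity of the edges going from `A` to `B`. -/
def cutCap {V : Type*} [DecidableEq V] (E : Finset (V × V)) (c : V × V → ℕ)
    (A B : Finset V) : ℕ :=
  ∑ e ∈ E.filter (fun e => e.1 ∈ A ∧ e.2 ∈ B), c e

/-- `(W, c, r, emb)` is an `(R, φ, ψ)`-witness of `(G, c_G, F)` with respect to `γ`: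
(1) `‖r‖₁ ≤ R`; (2) `deg_{F,c_G} ≤ deg_{W,c} + r ≤ (1/ψ)·deg_{F,c_G}` pointwise;
(3) for every cut `S` with `γ(S) ≤ γ(Sᶜ)`, both `c(E_W(S,Sᶜ)) + r(S) ≥ ψ(vol_{W,c}(S) + r(S))`
and the analogous inequality with all edges reversed; (4) `emb` embeds each witness edge
`(u,v)` as a directed `u`-`v` path of `G` with total congestion at most `1/(φψ)`. -/
structure IsWitness {V : Type*} [Fintype V] [DecidableEq V]
    (EG : Finset (V × V)) (cG : V × V → ℕ) (F : Finset (V × V))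
    (EW : Finset (V × V)) (c : V × V → ℕ) (r : V → ℕ) (emb : V × V → List V)
    (γ : V → ℕ) (R : ℕ) (φ ψ : ℝ) : Prop where
  r_bound : ∑ v, r v ≤ R
  deg_lower : ∀ v, degCap F cG v ≤ degCap EW c v + r v
  deg_upper : ∀ v, ψ * ((degCap EW c v : ℝ) + (r v : ℝ)) ≤ (degCap F cG v : ℝ)
  exp_out : ∀ S : Finset V, ∑ v ∈ S, γ v ≤ ∑ v ∈ Sᶜ, γ v →
    ψ * ((volCap EW c S : ℝ) + ∑ v ∈ S, (r v : ℝ)) ≤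
      (cutCap EW c S Sᶜ : ℝ) + ∑ v ∈ S, (r v : ℝ)
  exp_in : ∀ S : Finset V, ∑ v ∈ S, γ v ≤ ∑ v ∈ Sᶜ, γ v →
    ψ * ((volCap EW c S : ℝ) + ∑ v ∈ S, (r v : ℝ)) ≤
      (cutCap EW c Sᶜ S : ℝ) + ∑ v ∈ S, (r v : ℝ)
  emb_path : ∀ e ∈ EW, (emb e).Chain' (fun u v => (u, v) ∈ EG) ∧
    (emb e).head? = some e.1 ∧ (emb e).getLast? = some e.2
  congestion : ∀ eG ∈ EG,
    φ * ψ * (∑ e ∈ EW.filter (fun e => eG ∈ (emb e).zip (emb e).tail), (c e : ℝ)) ≤ (cG eG : ℝ)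

/-!
Let `A` be the side of `S` with `γ(A) ≤ γ(Aᶜ)`. Expansion of the witness bounds both witness
cuts of `A` below by `ψ · vol_F(A) - R`, which is at least `ψ/2 · vol_F(A)` because balance
gives `R ≤ ψ/2 · vol_F(A)`. A witness edge crossing the cut is embedded as a path that crosses
it in `G` as well, so congestion `1/(φψ)` makes each cut of `G` at least `φψ` times the
corresponding witness cut.
-/

namespace List

variable {α : Type*}

theorem IsChain.rel_of_mem_zip_tail {R : α → α → Prop} :
    ∀ {l : List α}, l.IsChain R → ∀ p ∈ l.zip l.tail, R p.1 p.2
  | [], _, p, hp => by simp at hp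
  | [_], _, p, hp => by simp at hp
  | _ :: _ :: _, h, p, hp => by
    rcases mem_cons.mp hp with rfl | hp
    · exact h.rel
    · exact h.tail.rel_of_mem_zip_tail p hp

theorem exists_mem_zip_tail_of_head?_of_getLast? (P : α → Prop) :
    ∀ {l : List α} {u v : α}, l.head? = some u → l.getLast? = some v → P u → ¬ P v →
      ∃ p ∈ l.zip l.tail, P p.1 ∧ ¬ P p.2
  | [], _, _, hu, _, _, _ => by simp at hu
  | [_], _, _, hu, hv, hPu, hPv => by
    simp only [head?_cons, getLast?_singleton, Option.some.injEq] at hu hv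
    exact absurd (hv ▸ hu ▸ hPu) hPv
  | a :: b :: t, u, v, hu, hv, hPu, hPv => by
    obtain rfl : a = u := by simpa using hu
    by_cases hPb : P b
    · have hv' : (b :: t).getLast? = some v := by rw [← hv]; simp [getLast?]
      obtain ⟨p, hp, hPp⟩ := exists_mem_zip_tail_of_head?_of_getLast? P rfl hv' hPb hPv
      exact ⟨p, mem_cons_of_mem _ hp, hPp⟩
    · exact ⟨(a, b), by simp, hPu, hPb⟩

end List

section Embedding

variable {V : Type*} [DecidableEq V]

def edgeLoad (EW : Finset (V × V)) (c : V × V → ℕ) (emb : V × V → List V) (eG : V × V) : ℕ :=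
  ∑ e ∈ EW.filter (fun e => eG ∈ (emb e).zip (emb e).tail), c e

/-- Every witness edge leaving `A` is routed through some edge of `G` leaving `A`. -/
theorem cutCap_le_sum_edgeLoad [Fintype V] {EG EW : Finset (V × V)} {c : V × V → ℕ}
    {emb : V × V → List V}
    (hpath : ∀ e ∈ EW, (emb e).IsChain (fun u v => (u, v) ∈ EG) ∧
      (emb e).head? = some e.1 ∧ (emb e).getLast? = some e.2)
    (A : Finset V) :
    cutCap EW c A Aᶜ ≤ ∑ eG ∈ EG.filter (fun e => e.1 ∈ A ∧ e.2 ∈ Aᶜ), edgeLoad EW c emb eG := by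
  set X := EG.filter (fun e => e.1 ∈ A ∧ e.2 ∈ Aᶜ)
  calc cutCap EW c A Aᶜ
      ≤ ∑ e ∈ EW, ∑ eG ∈ X.filter (fun eG => eG ∈ (emb e).zip (emb e).tail), c e := by
        rw [cutCap, sum_filter]
        refine sum_le_sum fun e he => ?_
        split_ifs with hA
        · obtain ⟨hchain, hhead, hlast⟩ := hpath e he
          obtain ⟨p, hp, hp1, hp2⟩ := List.exists_mem_zip_tail_of_head?_of_getLast? (· ∈ A)
            hhead hlast hA.1 (mem_compl.mp hA.2)
          have hpX : p ∈ X.filter (fun eG => eG ∈ (emb e).zip (emb e).tail) :=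
            mem_filter.mpr ⟨mem_filter.mpr
              ⟨hchain.rel_of_mem_zip_tail p hp, hp1, mem_compl.mpr hp2⟩, hp⟩
          exact single_le_sum (f := fun _ => c e) (fun _ _ => Nat.zero_le _) hpX
        · exact Nat.zero_le _
    _ = ∑ eG ∈ X, edgeLoad EW c emb eG := by
        simp only [edgeLoad, sum_filter]
        exact sum_comm

end Embedding

namespace IsWitness

variable {V : Type*} [Fintype V] [DecidableEq V] {EG : Finset (V × V)} {cG : V × V → ℕ}
  {F EW : Finset (V × V)} {c : V × V → ℕ} {r : V → ℕ} {emb : V × V → List V} {γ : V → ℕ}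
  {R : ℕ} {φ ψ : ℝ}

theorem mul_cutCap_le (hW : IsWitness EG cG F EW c r emb γ R φ ψ) (hφψ : 0 ≤ φ * ψ)
    (A : Finset V) : φ * ψ * (cutCap EW c A Aᶜ : ℝ) ≤ (cutCap EG cG A Aᶜ : ℝ) := by
  set X := EG.filter (fun e => e.1 ∈ A ∧ e.2 ∈ Aᶜ)
  have hcount : (cutCap EW c A Aᶜ : ℝ) ≤ ∑ eG ∈ X, (edgeLoad EW c emb eG : ℝ) := by
    exact_mod_cast cutCap_le_sum_edgeLoad (fun e he => hW.emb_path e he) A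
  calc φ * ψ * (cutCap EW c A Aᶜ : ℝ)
      ≤ ∑ eG ∈ X, φ * ψ * (edgeLoad EW c emb eG : ℝ) := by
        rw [← mul_sum]
        exact mul_le_mul_of_nonneg_left hcount hφψ
    _ ≤ ∑ eG ∈ X, (cG eG : ℝ) := sum_le_sum fun eG heG => by
        simpa only [edgeLoad, Nat.cast_sum] using hW.congestion eG (mem_filter.mp heG).1
    _ = (cutCap EG cG A Aᶜ : ℝ) := by rw [cutCap, Nat.cast_sum]

theorem sum_r_le (hW : IsWitness EG cG F EW c r emb γ R φ ψ) (A : Finset V) :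
    ∑ v ∈ A, (r v : ℝ) ≤ R := by
  exact_mod_cast (sum_le_sum_of_subset (subset_univ A)).trans hW.r_bound

theorem volCap_le_add (hW : IsWitness EG cG F EW c r emb γ R φ ψ) (A : Finset V) :
    (volCap F cG A : ℝ) ≤ volCap EW c A + ∑ v ∈ A, (r v : ℝ) := by
  have : volCap F cG A ≤ volCap EW c A + ∑ v ∈ A, r v := by
    rw [volCap, volCap, ← sum_add_distrib]
    exact sum_le_sum fun v _ => hW.deg_lower v
  exact_mod_cast this

/-- `x` is either witness cut of `A` in the expansion condition `(3)`; the `r`-terms are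
absorbed into `R`. -/
theorem sub_le_of_expansion (hW : IsWitness EG cG F EW c r emb γ R φ ψ) (hψ : 0 ≤ ψ)
    {A : Finset V} {x : ℝ}
    (hx : ψ * ((volCap EW c A : ℝ) + ∑ v ∈ A, (r v : ℝ)) ≤ x + ∑ v ∈ A, (r v : ℝ)) :
    ψ * volCap F cG A - R ≤ x := by
  nlinarith [mul_le_mul_of_nonneg_left (hW.volCap_le_add A) hψ, hW.sum_r_le A]

theorem le_cutCap_of_le_volCap (hW : IsWitness EG cG F EW c r emb γ R φ ψ) (hφ : 0 < φ)
    (hψ : 0 < ψ) {A : Finset V} (hγ : ∑ v ∈ A, γ v ≤ ∑ v ∈ Aᶜ, γ v)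
    (hA : 2 * (R : ℝ) / ψ ≤ volCap F cG A) :
    φ * ψ ^ 2 / 2 * volCap F cG A ≤ cutCap EG cG A Aᶜ ∧
      φ * ψ ^ 2 / 2 * volCap F cG A ≤ cutCap EG cG Aᶜ A := by
  have hφψ : 0 ≤ φ * ψ := (mul_pos hφ hψ).le
  have hR : (R : ℝ) ≤ ψ * volCap F cG A / 2 := by
    rw [div_le_iff₀ hψ] at hA
    linarith
  have transfer : ∀ {x y : ℝ}, ψ * volCap F cG A - R ≤ x → φ * ψ * x ≤ y →
      φ * ψ ^ 2 / 2 * volCap F cG A ≤ y := fun hx hy => by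
    nlinarith [mul_le_mul_of_nonneg_left hx hφψ, mul_le_mul_of_nonneg_left hR hφψ]
  refine ⟨transfer (hW.sub_le_of_expansion hψ.le (hW.exp_out A hγ)) (hW.mul_cutCap_le hφψ A),
    transfer (hW.sub_le_of_expansion hψ.le (hW.exp_in A hγ)) ?_⟩
  simpa only [compl_compl] using hW.mul_cutCap_le hφψ Aᶜ

theorem le_min_cutCap (hW : IsWitness EG cG F EW c r emb γ R φ ψ) (hφ : 0 < φ) (hψ : 0 < ψ)
    {A : Finset V} (hγ : ∑ v ∈ A, γ v ≤ ∑ v ∈ Aᶜ, γ v)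
    (hbal : 2 * (R : ℝ) / ψ ≤ min (volCap F cG A : ℝ) (volCap F cG Aᶜ : ℝ)) :
    φ * ψ ^ 2 / 2 * min (volCap F cG A : ℝ) (volCap F cG Aᶜ : ℝ) ≤
      min (cutCap EG cG A Aᶜ : ℝ) (cutCap EG cG Aᶜ A : ℝ) := by
  obtain ⟨hout, hin⟩ := hW.le_cutCap_of_le_volCap hφ hψ hγ (hbal.trans (min_le_left _ _))
  have hmin : φ * ψ ^ 2 / 2 * min (volCap F cG A : ℝ) (volCap F cG Aᶜ : ℝ) ≤
      φ * ψ ^ 2 / 2 * volCap F cG A :=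
    mul_le_mul_of_nonneg_left (min_le_left _ _) (by positivity)
  exact le_min (hmin.trans hout) (hmin.trans hin)

end IsWitness

theorem stmt_13_general {V : Type*} [Fintype V] [DecidableEq V]
    (EG : Finset (V × V)) (cG : V × V → ℕ) (F : Finset (V × V))
    (EW : Finset (V × V)) (c : V × V → ℕ) (r : V → ℕ) (emb : V × V → List V) (γ : V → ℕ)
    (R : ℕ) (φ ψ : ℝ) (hφ : 0 < φ) (hψ0 : 0 < ψ)
    (hW : IsWitness EG cG F EW c r emb γ R φ ψ) :
    ¬ ∃ S : Finset V,
        2 * (R : ℝ) / ψ ≤ min (volCap F cG S : ℝ) (volCap F cG Sᶜ : ℝ) ∧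
        min (cutCap EG cG S Sᶜ : ℝ) (cutCap EG cG Sᶜ S : ℝ) <
          φ * ψ ^ 2 / 2 * min (volCap F cG S : ℝ) (volCap F cG Sᶜ : ℝ) := by
  rintro ⟨S, hbal, hsparse⟩
  rcases le_total (∑ v ∈ S, γ v) (∑ v ∈ Sᶜ, γ v) with hγ | hγ
  · exact (hW.le_min_cutCap hφ hψ0 hγ hbal).not_gt hsparse
  · rw [min_comm (volCap F cG S : ℝ)] at hbal hsparse
    rw [min_comm (cutCap EG cG S Sᶜ : ℝ)] at hsparse
    have key := hW.le_min_cutCap hφ hψ0 (A := Sᶜ) (by rwa [compl_compl]) (by rwa [compl_compl])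
    rw [compl_compl] at key
    exact key.not_gt hsparse

/-- If `(G, c_G, F)` admits an `(R,φ,ψ)`-witness (w.r.t. some `γ`), then `G`
contains no cut `S` that is both `(2R/ψ)`-balanced and `(φψ²/2)`-sparse with respect to `F`. -/
theorem stmt_13 {V : Type*} [Fintype V] [DecidableEq V]
    (EG : Finset (V × V)) (cG : V × V → ℕ) (F : Finset (V × V)) (hF : F ⊆ EG)
    (EW : Finset (V × V)) (c : V × V → ℕ) (r : V → ℕ) (emb : V × V → List V) (γ : V → ℕ)
    (R : ℕ) (φ ψ : ℝ) (hφ : 0 < φ) (hψ0 : 0 < ψ) (hψ1 : ψ ≤ 1)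
    (hW : IsWitness EG cG F EW c r emb γ R φ ψ) :
    ¬ ∃ S : Finset V,
        2 * (R : ℝ) / ψ ≤ min (volCap F cG S : ℝ) (volCap F cG Sᶜ : ℝ) ∧
        min (cutCap EG cG S Sᶜ : ℝ) (cutCap EG cG Sᶜ S : ℝ) <
          φ * ψ ^ 2 / 2 * min (volCap F cG S : ℝ) (volCap F cG Sᶜ : ℝ) :=
  stmt_13_general EG cG F EW c r emb γ R φ ψ hφ hψ0 hW
end

section
/- Let (G, c_G) be a capacitated directed graph, F ⊆ E, and φ, ψ > 0 with ψ ≤ 1. Suppose there exists an (R, φ, ψ)-witness of (G, c_G, F) with respect to some γ, where R < 1/φ. Then F is (φψ²/2)-expanding in (G, c_G): every strongly connected component of G contains no (φψ²/2)-sparse cut with respect to F, assuming every edge has capacity at least 1. -/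
open Finset

/-- Reachability along directed edges of `E`. -/
def reachF {V : Type*} [DecidableEq V] (E : Finset (V × V)) : V → V → Prop :=
  Relation.ReflTransGen fun u v => (u, v) ∈ E

/-- `C` is a strongly connected component of the graph with edge set `E`. -/
def IsSCCF {V : Type*} [DecidableEq V] (E : Finset (V × V)) (C : Finset V) : Prop :=
  C.Nonempty ∧ (∀ u ∈ C, ∀ v ∈ C, reachF E u v) ∧
    ∀ u ∈ C, ∀ v, reachF E u v → reachF E v u → v ∈ C

/-! The cut `(S, C \ S)` is first enlarged to a cut `(A, Aᶜ)` of the whole graph by adding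
everything reachable from `S` outside `C`; since `C` is a strongly connected component, every
edge leaving `A` still goes from `S` to `C \ S`. Strong connectivity gives one such edge, so the
cut has capacity at least `1`. On the other hand the witness is a `ψ`-expander up to the
small error `R`, so its cut `(A, Aᶜ)` has capacity at least `ψ·min(vol S, vol (C \ S)) - R`,
and routing it along the embedding costs a factor `φψ`. Since `φψR < 1`, adding the two
bounds gives the claim. -/

theorem List.exists_mem_zip_tail_of_isChain {α : Type*} {r : α → α → Prop} {p : α → Prop} :
    ∀ {l : List α} {a b : α}, l.IsChain r → l.head? = some a → l.getLast? = some b →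
      p a → ¬ p b → ∃ x ∈ l.zip l.tail, r x.1 x.2 ∧ p x.1 ∧ ¬ p x.2
  | [], _, _, _, ha, _, _, _ => by simp at ha
  | [x], a, b, _, ha, hb, hpa, hpb => by
    simp only [List.head?_cons, List.getLast?_singleton, Option.some.injEq] at ha hb
    subst ha hb
    exact absurd hpa hpb
  | x :: y :: l, a, b, hl, ha, hb, hpa, hpb => by
    rw [List.isChain_cons_cons] at hl
    simp only [List.head?_cons, Option.some.injEq] at ha
    subst ha
    by_cases hpy : p y
    · obtain ⟨z, hz, hrz⟩ := exists_mem_zip_tail_of_isChain hl.2 rfl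
        (by rwa [List.getLast?_cons_cons] at hb) hpy hpb
      exact ⟨z, List.mem_cons_of_mem _ hz, hrz⟩
    · exact ⟨(x, y), by simp, hl.1, hpa, hpy⟩

section Graph

variable {V : Type*} [DecidableEq V]

theorem reachF.exists_edge_of_mem_of_notMem {E : Finset (V × V)} {A : Finset V} {u v : V}
    (h : reachF E u v) (hu : u ∈ A) (hv : v ∉ A) : ∃ e ∈ E, e.1 ∈ A ∧ e.2 ∉ A := by
  induction h with
  | refl => exact absurd hu hv
  | @tail w v _ hwv ih =>
    by_cases hw : w ∈ A
    · exact ⟨(w, v), hwv, hw, hv⟩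
    · exact ih hw

theorem cutCap_le_cutCap {E : Finset (V × V)} (c : V × V → ℕ) {A B A' B' : Finset V}
    (h : ∀ e ∈ E, e.1 ∈ A → e.2 ∈ B → e.1 ∈ A' ∧ e.2 ∈ B') :
    cutCap E c A B ≤ cutCap E c A' B' :=
  Finset.sum_le_sum_of_subset fun e he => by
    rw [Finset.mem_filter] at he ⊢
    exact ⟨he.1, h e he.1 he.2.1 he.2.2⟩

theorem one_le_cutCap_of_reachF [Fintype V] {E : Finset (V × V)} {c : V × V → ℕ}
    (hc : ∀ e ∈ E, 1 ≤ c e) {A : Finset V} {u v : V} (h : reachF E u v) (hu : u ∈ A)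
    (hv : v ∉ A) :
    1 ≤ cutCap E c A Aᶜ := by
  obtain ⟨e, he, heA, heA'⟩ := h.exists_edge_of_mem_of_notMem hu hv
  exact (hc e he).trans <| Finset.single_le_sum (fun _ _ => Nat.zero_le _) <|
    Finset.mem_filter.2 ⟨he, heA, Finset.mem_compl.2 heA'⟩

theorem volCap_mono (F : Finset (V × V)) (c : V × V → ℕ) {S T : Finset V} (h : S ⊆ T) :
    volCap F c S ≤ volCap F c T :=
  Finset.sum_le_sum_of_subset h

theorem IsSCCF.exists_cut_extension [Fintype V] {E : Finset (V × V)} {C S : Finset V}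
    (hC : IsSCCF E C) (hS : S ⊆ C) :
    ∃ A : Finset V, S ⊆ A ∧ C \ S ⊆ Aᶜ ∧
      ∀ e ∈ E, e.1 ∈ A → e.2 ∈ Aᶜ → e.1 ∈ S ∧ e.2 ∈ C \ S := by
  classical
  obtain ⟨-, hconn, hmax⟩ := hC
  refine ⟨Finset.univ.filter fun w => (∃ x ∈ S, reachF E x w) ∧ w ∉ C \ S,
    fun x hx => ?_, fun x hx => ?_, fun e he h₁ h₂ => ?_⟩
  · simp only [Finset.mem_filter, Finset.mem_univ, Finset.mem_sdiff, hx, not_true_eq_false,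
      and_false, not_false_eq_true, and_true, true_and]
    exact ⟨x, hx, .refl⟩
  · simp [Finset.mem_sdiff.1 hx]
  · simp only [Finset.mem_compl, Finset.mem_filter, Finset.mem_univ, true_and] at h₁ h₂
    obtain ⟨⟨x, hxS, hx₁⟩, h₁T⟩ := h₁
    have he' : reachF E e.1 e.2 := .single he
    have h₂T : e.2 ∈ C \ S := by
      by_contra h
      exact h₂ ⟨⟨x, hxS, hx₁.trans he'⟩, h⟩
    have h₂C : e.2 ∈ C := (Finset.mem_sdiff.1 h₂T).1
    have h₁C : e.1 ∈ C := hmax e.2 h₂C e.1 ((hconn _ h₂C x (hS hxS)).trans hx₁) he'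
    exact ⟨by simpa [h₁C] using h₁T, h₂T⟩

end Graph

section Witness

variable {V : Type*} [Fintype V] [DecidableEq V]
  {EG : Finset (V × V)} {cG : V × V → ℕ} {F : Finset (V × V)}
  {EW : Finset (V × V)} {c : V × V → ℕ} {r : V → ℕ} {emb : V × V → List V} {γ : V → ℕ}
  {R : ℕ} {φ ψ : ℝ}

/-- Each witness edge crossing `(A, Aᶜ)` is embedded along a path that uses some edge of `G`
crossing `(A, Aᶜ)`. -/
theorem cutCap_le_sum_load
    (hemb : ∀ e ∈ EW, (emb e).IsChain (fun u v => (u, v) ∈ EG) ∧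
      (emb e).head? = some e.1 ∧ (emb e).getLast? = some e.2) (A : Finset V) :
    cutCap EW c A Aᶜ ≤ ∑ eG ∈ EG.filter (fun e => e.1 ∈ A ∧ e.2 ∈ Aᶜ),
      ∑ e ∈ EW.filter (fun e => eG ∈ (emb e).zip (emb e).tail), c e := by
  set K := EG.filter (fun e => e.1 ∈ A ∧ e.2 ∈ Aᶜ)
  calc cutCap EW c A Aᶜ = ∑ e ∈ EW.filter (fun e => e.1 ∈ A ∧ e.2 ∈ Aᶜ), c e := rfl
    _ ≤ ∑ e ∈ EW.filter (fun e => e.1 ∈ A ∧ e.2 ∈ Aᶜ),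
          ∑ eG ∈ K.filter (fun eG => eG ∈ (emb e).zip (emb e).tail), c e := by
        refine Finset.sum_le_sum fun e he => ?_
        obtain ⟨heW, he₁, he₂⟩ := Finset.mem_filter.1 he
        obtain ⟨hpath, hhead, hlast⟩ := hemb e heW
        obtain ⟨p, hp, hpG, hp₁, hp₂⟩ :=
          List.exists_mem_zip_tail_of_isChain hpath hhead hlast he₁ (Finset.mem_compl.1 he₂)
        exact Finset.single_le_sum (f := fun _ => c e) (fun _ _ => Nat.zero_le _) <|
          Finset.mem_filter.2 ⟨Finset.mem_filter.2 ⟨hpG, hp₁, Finset.mem_compl.2 hp₂⟩, hp⟩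
    _ ≤ ∑ e ∈ EW, ∑ eG ∈ K.filter (fun eG => eG ∈ (emb e).zip (emb e).tail), c e :=
        Finset.sum_le_sum_of_subset (Finset.filter_subset _ _)
    _ = _ := Finset.sum_comm' fun _ _ => by simp only [Finset.mem_filter]; tauto

theorem IsWitness.mul_cutCap_le_cutCap (hW : IsWitness EG cG F EW c r emb γ R φ ψ)
    (hφψ : 0 ≤ φ * ψ) (A : Finset V) :
    φ * ψ * (cutCap EW c A Aᶜ : ℝ) ≤ cutCap EG cG A Aᶜ := by
  have hload := cutCap_le_sum_load (c := c) hW.emb_path A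
  calc φ * ψ * (cutCap EW c A Aᶜ : ℝ)
      ≤ φ * ψ * ∑ eG ∈ EG.filter (fun e => e.1 ∈ A ∧ e.2 ∈ Aᶜ),
          ∑ e ∈ EW.filter (fun e => eG ∈ (emb e).zip (emb e).tail), (c e : ℝ) := by
        gcongr; exact_mod_cast hload
    _ ≤ ∑ eG ∈ EG.filter (fun e => e.1 ∈ A ∧ e.2 ∈ Aᶜ), (cG eG : ℝ) := by
        rw [Finset.mul_sum]
        exact Finset.sum_le_sum fun eG heG => hW.congestion eG (Finset.mem_filter.1 heG).1
    _ = cutCap EG cG A Aᶜ := by simp [cutCap]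

theorem IsWitness.mul_volCap_sub_le (hW : IsWitness EG cG F EW c r emb γ R φ ψ) (hψ : 0 ≤ ψ)
    {B : Finset V} {x : ℝ}
    (h : ψ * ((volCap EW c B : ℝ) + ∑ v ∈ B, (r v : ℝ)) ≤ x + ∑ v ∈ B, (r v : ℝ)) :
    ψ * volCap F cG B - R ≤ x := by
  have hvol : volCap F cG B ≤ volCap EW c B + ∑ v ∈ B, r v := by
    rw [volCap, volCap, ← Finset.sum_add_distrib]
    exact Finset.sum_le_sum fun v _ => hW.deg_lower v
  have hr : ∑ v ∈ B, r v ≤ R :=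
    (Finset.sum_le_sum_of_subset (Finset.subset_univ B)).trans hW.r_bound
  have hvol' : (volCap F cG B : ℝ) ≤ volCap EW c B + ∑ v ∈ B, (r v : ℝ) := by exact_mod_cast hvol
  have hr' : ∑ v ∈ B, (r v : ℝ) ≤ R := by exact_mod_cast hr
  linarith [mul_le_mul_of_nonneg_left hvol' hψ]

/-- Whichever side of the cut is lighter in `γ`, the witness expands out of it or into it. -/
theorem IsWitness.mul_min_volCap_sub_le_cutCap (hW : IsWitness EG cG F EW c r emb γ R φ ψ)
    (hψ : 0 ≤ ψ) (A : Finset V) :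
    ψ * min (volCap F cG A : ℝ) (volCap F cG Aᶜ) - R ≤ cutCap EW c A Aᶜ := by
  rcases le_total (∑ v ∈ A, γ v) (∑ v ∈ Aᶜ, γ v) with hγ | hγ
  · linarith [hW.mul_volCap_sub_le hψ (hW.exp_out A hγ),
      mul_le_mul_of_nonneg_left (min_le_left (volCap F cG A : ℝ) (volCap F cG Aᶜ)) hψ]
  · have hexp := hW.exp_in Aᶜ (by rwa [compl_compl])
    rw [compl_compl] at hexp
    linarith [hW.mul_volCap_sub_le hψ hexp,
      mul_le_mul_of_nonneg_left (min_le_right (volCap F cG A : ℝ) (volCap F cG Aᶜ)) hψ]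

theorem IsWitness.mul_min_volCap_le_cutCap_sdiff (hW : IsWitness EG cG F EW c r emb γ R φ ψ)
    (hφ : 0 < φ) (hψ0 : 0 < ψ) (hψ1 : ψ ≤ 1) (hcap : ∀ e ∈ EG, 1 ≤ cG e)
    (hR : (R : ℝ) < 1 / φ) {C S : Finset V} (hC : IsSCCF EG C) (hS : S ⊆ C)
    (hSne : S.Nonempty) (hTne : (C \ S).Nonempty) :
    φ * ψ ^ 2 / 2 * min (volCap F cG S : ℝ) (volCap F cG (C \ S)) ≤ cutCap EG cG S (C \ S) := by
  obtain ⟨A, hSA, hTA, hcross⟩ := hC.exists_cut_extension hS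
  obtain ⟨s, hs⟩ := hSne
  obtain ⟨t, ht⟩ := hTne
  have hcut : cutCap EG cG A Aᶜ ≤ cutCap EG cG S (C \ S) := cutCap_le_cutCap cG hcross
  have hone : 1 ≤ cutCap EG cG A Aᶜ :=
    one_le_cutCap_of_reachF hcap (hC.2.1 s (hS hs) t (Finset.mem_sdiff.1 ht).1) (hSA hs)
      (Finset.mem_compl.1 (hTA ht))
  have hmin : min (volCap F cG S : ℝ) (volCap F cG (C \ S)) ≤
      min (volCap F cG A : ℝ) (volCap F cG Aᶜ) := by
    gcongr
    · exact_mod_cast volCap_mono F cG hSA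
    · exact_mod_cast volCap_mono F cG hTA
  have hφψ : 0 ≤ φ * ψ := by positivity
  have hload : φ * ψ * (ψ * min (volCap F cG A : ℝ) (volCap F cG Aᶜ) - R) ≤ cutCap EG cG A Aᶜ :=
    (mul_le_mul_of_nonneg_left (hW.mul_min_volCap_sub_le_cutCap hψ0.le A) hφψ).trans
      (hW.mul_cutCap_le_cutCap hφψ A)
  have hφψR : φ * ψ * R ≤ 1 := by
    have hφR : φ * R < 1 := by rwa [lt_div_iff₀ hφ, mul_comm] at hR
    nlinarith [mul_nonneg hφ.le (Nat.cast_nonneg (α := ℝ) R)]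
  calc φ * ψ ^ 2 / 2 * min (volCap F cG S : ℝ) (volCap F cG (C \ S))
      ≤ φ * ψ ^ 2 / 2 * min (volCap F cG A : ℝ) (volCap F cG Aᶜ) := by gcongr
    _ = (φ * ψ * (ψ * min (volCap F cG A : ℝ) (volCap F cG Aᶜ) - R) + φ * ψ * R) / 2 := by ring
    _ ≤ (cutCap EG cG A Aᶜ + 1) / 2 := by gcongr
    _ ≤ cutCap EG cG A Aᶜ := by linarith [(Nat.one_le_cast (α := ℝ)).2 hone]
    _ ≤ cutCap EG cG S (C \ S) := by exact_mod_cast hcut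

end Witness

theorem stmt_14_general {V : Type*} [Fintype V] [DecidableEq V]
    (EG : Finset (V × V)) (cG : V × V → ℕ) (F : Finset (V × V))
    (EW : Finset (V × V)) (c : V × V → ℕ) (r : V → ℕ) (emb : V × V → List V) (γ : V → ℕ)
    (R : ℕ) (φ ψ : ℝ) (hφ : 0 < φ) (hψ0 : 0 < ψ) (hψ1 : ψ ≤ 1)
    (hcap : ∀ e ∈ EG, 1 ≤ cG e) (hR : (R : ℝ) < 1 / φ)
    (hW : IsWitness EG cG F EW c r emb γ R φ ψ) :
    ∀ C : Finset V, IsSCCF EG C → ∀ S ⊆ C, S.Nonempty → S ≠ C →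
      φ * ψ ^ 2 / 2 * min (volCap F cG S : ℝ) (volCap F cG (C \ S) : ℝ) ≤
        min (cutCap EG cG S (C \ S) : ℝ) (cutCap EG cG (C \ S) S : ℝ) := by
  intro C hC S hSC hSne hSC'
  have hTne : (C \ S).Nonempty := Finset.sdiff_nonempty.2 fun h => hSC' (hSC.antisymm h)
  refine le_min (hW.mul_min_volCap_le_cutCap_sdiff hφ hψ0 hψ1 hcap hR hC hSC hSne hTne) ?_
  have h := hW.mul_min_volCap_le_cutCap_sdiff hφ hψ0 hψ1 hcap hR hC Finset.sdiff_subset hTne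
    (by rwa [Finset.sdiff_sdiff_eq_self hSC])
  rwa [Finset.sdiff_sdiff_eq_self hSC, min_comm] at h

/-- If `(G, c_G, F)` admits an `(R,φ,ψ)`-witness with `R < 1/φ` and every
edge of `G` has capacity at least `1`, then `F` is `(φψ²/2)`-expanding in `(G, c_G)`: no
strongly connected component of `G` contains a `(φψ²/2)`-sparse cut with respect to `F`. -/
theorem stmt_14 {V : Type*} [Fintype V] [DecidableEq V]
    (EG : Finset (V × V)) (cG : V × V → ℕ) (F : Finset (V × V)) (hF : F ⊆ EG)
    (EW : Finset (V × V)) (c : V × V → ℕ) (r : V → ℕ) (emb : V × V → List V) (γ : V → ℕ)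
    (R : ℕ) (φ ψ : ℝ) (hφ : 0 < φ) (hψ0 : 0 < ψ) (hψ1 : ψ ≤ 1)
    (hcap : ∀ e ∈ EG, 1 ≤ cG e) (hR : (R : ℝ) < 1 / φ)
    (hW : IsWitness EG cG F EW c r emb γ R φ ψ) :
    ∀ C : Finset V, IsSCCF EG C → ∀ S ⊆ C, S.Nonempty → S ≠ C →
      φ * ψ ^ 2 / 2 * min (volCap F cG S : ℝ) (volCap F cG (C \ S) : ℝ) ≤
        min (cutCap EG cG S (C \ S) : ℝ) (cutCap EG cG (C \ S) S : ℝ) :=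
  stmt_14_general EG cG F EW c r emb γ R φ ψ hφ hψ0 hψ1 hcap hR hW
end
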